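/- arXiv:1409.4688 — 6 statements merged into one kernel-verified Lean document; each statement's English description precedes it below -/
import Mathlib

section
/- Let k be a field, n ≥ 1, and V₁, …, V_{n+1} k-vector spaces. Let f be a linear functional on V₁ ⊗ ⋯ ⊗ V_{n+1}. Suppose that for every k with 1 ≤ k ≤ n, f lies in the image of the canonical map Vₖ* ⊗ (⨂_{i ≠ k} Vᵢ)* → (V₁ ⊗ ⋯ ⊗ V_{n+1})*. Then f lies in the image of the canonical map V₁* ⊗ ⋯ ⊗ V_{n+1}* → (V₁ ⊗ ⋯ ⊗ V_{n+1})*. -/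
/-!
Induction on the number of factors, keeping one index `z` free of hypotheses. Pick `z₀ ≠ z` and
write `f = ∑ₐ ψₐ ⊗ θₐ` along `z₀`. Choosing a basis `e_b` of the span of the `ψₐ` and vectors
`v_b` with `e_c(v_b) = δ_{bc}` gives `f = ∑_b e_b ⊗ f(v_b, ·)`. Fixing the `z₀`-th argument of a
functional that splits off the factor `j ≠ z₀` yields a functional that still splits off `j`, so
each slice `f(v_b, ·)` satisfies the hypotheses on the remaining factors with the same free
index `z`; by induction it is a sum of products of functionals, hence so is `f`.
-/

open TensorProduct Module Submodule

namespace PiTensorProduct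

section CommSemiring

variable {R : Type*} [CommSemiring R] {ι : Type*}
  {V : ι → Type*} [∀ i, AddCommMonoid (V i)] [∀ i, Module R (V i)]

variable (V) in
def splitFunctionals (j : ι) : Set (Dual R (⨂[R] i, V i)) :=
  {g | ∃ (ψ : Dual R (V j)) (θ : Dual R (⨂[R] i : {i // i ≠ j}, V i)),
    ∀ x : ∀ i, V i, g (tprod R x) = ψ (x j) * θ (tprod R fun i : {i // i ≠ j} => x i)}

variable (V) in
def productFunctionals [Fintype ι] : Set (Dual R (⨂[R] i, V i)) :=
  {g | ∃ φ : ∀ i, Dual R (V i), ∀ x : ∀ i, V i, g (tprod R x) = ∏ i, φ i (x i)}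

theorem mem_productFunctionals_of_subsingleton [Fintype ι] [Subsingleton ι] (z : ι)
    (f : Dual R (⨂[R] i, V i)) : f ∈ productFunctionals V := by
  refine ⟨fun i => f ∘ₗ (subsingletonEquiv (R := R) (s := V) i).symm.toLinearMap, fun x => ?_⟩
  rw [Fintype.prod_subsingleton _ z, LinearMap.comp_apply, LinearEquiv.coe_coe,
    ← subsingletonEquiv_apply_tprod (R := R) z x, LinearEquiv.symm_apply_apply]

variable [DecidableEq ι]

noncomputable def tensorSplitAt (z : ι) :
    (⨂[R] i, V i) ≃ₗ[R] V z ⊗[R] (⨂[R] i : {i // i ≠ z}, V i) :=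
  reindex R V (Equiv.sumCompl (· = z)).symm ≪≫ₗ
    (tmulEquivDep R (fun i => V ((Equiv.sumCompl (· = z)).symm.symm i))).symm ≪≫ₗ
    TensorProduct.congr (subsingletonEquiv (⟨z, rfl⟩ : {i // i = z})) (LinearEquiv.refl R _)

@[simp] theorem tensorSplitAt_tprod (z : ι) (x : ∀ i, V i) :
    tensorSplitAt z (tprod R x) = x z ⊗ₜ tprod R (fun i : {i // i ≠ z} => x i) := by
  simp only [tensorSplitAt, LinearEquiv.trans_apply, reindex_tprod, tmulEquivDep_symm_apply]
  exact (congr_tmul _ _ _ _).trans (congrArg (· ⊗ₜ _) (subsingletonEquiv_apply_tprod _ _))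

theorem tensorSplitAt_symm_tmul_tprod (z : ι) (v : V z) (y : ∀ i : {i // i ≠ z}, V i) :
    (tensorSplitAt z).symm (v ⊗ₜ tprod R y) = tprod R ((Equiv.piSplitAt z V).symm (v, y)) := by
  rw [LinearEquiv.symm_apply_eq, tensorSplitAt_tprod]
  simp only [Equiv.piSplitAt_symm_apply, dif_pos]
  congr 2
  funext i
  rw [dif_neg i.2]

noncomputable def sliceAt (z : ι) (v : V z) :
    Dual R (⨂[R] i, V i) →ₗ[R] Dual R (⨂[R] i : {i // i ≠ z}, V i) :=
  ((tensorSplitAt z).symm.toLinearMap ∘ₗ TensorProduct.mk R _ _ v).dualMap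

@[simp] theorem sliceAt_tprod (z : ι) (v : V z) (f : Dual R (⨂[R] i, V i))
    (y : ∀ i : {i // i ≠ z}, V i) :
    sliceAt z v f (tprod R y) = f (tprod R ((Equiv.piSplitAt z V).symm (v, y))) := by
  simp [sliceAt, tensorSplitAt_symm_tmul_tprod]

noncomputable def dualTmulAt (z : ι) :
    Dual R (V z) →ₗ[R] Dual R (⨂[R] i : {i // i ≠ z}, V i) →ₗ[R] Dual R (⨂[R] i, V i) :=
  (TensorProduct.mk R _ _).compr₂
    ((tensorSplitAt z).dualMap.toLinearMap ∘ₗ TensorProduct.dualDistrib R _ _)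

@[simp] theorem dualTmulAt_tprod (z : ι) (ψ : Dual R (V z))
    (θ : Dual R (⨂[R] i : {i // i ≠ z}, V i)) (x : ∀ i, V i) :
    dualTmulAt z ψ θ (tprod R x) = ψ (x z) * θ (tprod R fun i : {i // i ≠ z} => x i) := by
  simp [dualTmulAt]

theorem sliceAt_dualTmulAt (z : ι) (v : V z) (ψ : Dual R (V z))
    (θ : Dual R (⨂[R] i : {i // i ≠ z}, V i)) :
    sliceAt z v (dualTmulAt z ψ θ) = ψ v • θ := by
  ext y
  simp [sliceAt, dualTmulAt, LinearMap.dualMap_apply, LinearEquiv.dualMap_apply]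

theorem mem_splitFunctionals_iff {j : ι} {g : Dual R (⨂[R] i, V i)} :
    g ∈ splitFunctionals V j ↔ ∃ ψ θ, dualTmulAt j ψ θ = g := by
  refine exists₂_congr fun ψ θ => ⟨fun h => ?_, fun h x => by rw [← h, dualTmulAt_tprod]⟩
  ext x
  simp [h]

theorem sliceAt_mem_splitFunctionals {z j : ι} (hj : j ≠ z) (v : V z)
    {g : Dual R (⨂[R] i, V i)} (hg : g ∈ splitFunctionals V j) :
    sliceAt z v g ∈ splitFunctionals (fun i : {i // i ≠ z} => V i) ⟨j, hj⟩ := by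
  obtain ⟨ψ, θ, hg⟩ := hg
  let z' : {i // i ≠ j} := ⟨z, hj.symm⟩
  let e : {i : {i // i ≠ z} // i ≠ ⟨j, hj⟩} ≃ {i : {i // i ≠ j} // i ≠ z'} :=
    { toFun := fun i => ⟨⟨i.1.1, fun h => i.2 (Subtype.ext h)⟩, fun h => i.1.2 (congrArg (·.1) h)⟩
      invFun := fun i => ⟨⟨i.1.1, fun h => i.2 (Subtype.ext h)⟩, fun h => i.1.2 (congrArg (·.1) h)⟩
      left_inv := fun _ => rfl
      right_inv := fun _ => rfl }
  refine ⟨ψ, sliceAt z' v θ ∘ₗ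
    (reindex R (fun i : {i : {i // i ≠ z} // i ≠ ⟨j, hj⟩} => V i.1.1) e).toLinearMap, fun y => ?_⟩
  rw [sliceAt_tprod, hg, LinearMap.comp_apply, LinearEquiv.coe_coe, reindex_tprod, sliceAt_tprod]
  congr 1
  · simp [Equiv.piSplitAt_symm_apply, hj]
  · congr 2
    funext i
    by_cases hi : i.1 = z
    · obtain ⟨i, hij⟩ := i
      dsimp only at hi
      subst hi
      simp [Equiv.piSplitAt_symm_apply, z']
    · have hi' : i ≠ z' := fun h => hi (congrArg Subtype.val h)
      simp only [Equiv.piSplitAt_symm_apply, dif_neg hi, dif_neg hi']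
      rfl

theorem dualTmulAt_mem_productFunctionals [Fintype ι] {z : ι} (ψ : Dual R (V z))
    {θ : Dual R (⨂[R] i : {i // i ≠ z}, V i)}
    (hθ : θ ∈ productFunctionals (fun i : {i // i ≠ z} => V i)) :
    dualTmulAt z ψ θ ∈ productFunctionals V := by
  obtain ⟨φ, hθ⟩ := hθ
  refine ⟨(Equiv.piSplitAt z fun i => Dual R (V i)).symm (ψ, φ), fun x => ?_⟩
  rw [dualTmulAt_tprod, hθ, Fintype.prod_eq_mul_prod_subtype_ne _ z]
  simp only [Equiv.piSplitAt_symm_apply, dif_pos]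
  exact congrArg _ (Finset.prod_congr rfl fun i _ => by rw [dif_neg i.2])

end CommSemiring

end PiTensorProduct

section Field

variable {k : Type*} [Field k]

theorem Module.Dual.exists_sum_apply_smul_eq {M : Type*} [AddCommGroup M] [Module k M]
    (W : Submodule k (Dual k M)) [FiniteDimensional k W] :
    ∃ (n : ℕ) (e : Fin n → Dual k M) (v : Fin n → M), ∀ ψ ∈ W, ∑ b, ψ (v b) • e b = ψ := by
  have := Module.Free.of_divisionRing k W
  let B := Module.finBasis k W
  have hsurj : Function.Surjective W.subtype.flip :=
    (LinearMap.flip_surjective_iff₁ (V₁ := W) (V₂ := M)).2 W.injective_subtype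
  choose v hv using fun b => hsurj (B.coord b)
  refine ⟨_, fun b => B b, v, fun ψ hψ => ?_⟩
  have hcoord (b) : ψ (v b) = B.repr ⟨ψ, hψ⟩ b := LinearMap.congr_fun (hv b) ⟨ψ, hψ⟩
  have := congrArg Subtype.val (B.sum_repr ⟨ψ, hψ⟩)
  push_cast at this
  simpa only [hcoord] using this

namespace PiTensorProduct

variable {ι : Type*} [DecidableEq ι] {V : ι → Type*} [∀ i, AddCommGroup (V i)]
  [∀ i, Module k (V i)]

theorem exists_eq_sum_dualTmulAt_sliceAt {z : ι} {f : Dual k (⨂[k] i, V i)}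
    (hf : f ∈ span k (splitFunctionals V z)) :
    ∃ (n : ℕ) (e : Fin n → Dual k (V z)) (v : Fin n → V z),
      f = ∑ b, dualTmulAt z (e b) (sliceAt z (v b) f) := by
  obtain ⟨m, c, g, rfl⟩ := mem_span_set'.1 hf
  choose ψ θ hψθ using fun a => mem_splitFunctionals_iff.1 (g a).2
  have hψ (a) : ψ a ∈ span k (Set.range ψ) := subset_span ⟨a, rfl⟩
  have := FiniteDimensional.span_of_finite k (Set.finite_range ψ)
  obtain ⟨n, e, v, he⟩ := Module.Dual.exists_sum_apply_smul_eq (span k (Set.range ψ))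
  refine ⟨n, e, v, ?_⟩
  simp only [map_sum, map_smul, ← hψθ, sliceAt_dualTmulAt]
  calc ∑ a, c a • dualTmulAt z (ψ a) (θ a)
      = ∑ a, c a • dualTmulAt z (∑ b, ψ a (v b) • e b) (θ a) :=
        Finset.sum_congr rfl fun a _ => by rw [he _ (hψ a)]
    _ = _ := by
        simp only [map_sum, map_smul, LinearMap.sum_apply, LinearMap.smul_apply, Finset.smul_sum]
        exact Finset.sum_comm

theorem mem_span_productFunctionals [Fintype ι] (z : ι) (f : Dual k (⨂[k] i, V i))
    (h : ∀ j ≠ z, f ∈ span k (splitFunctionals V j)) : f ∈ span k (productFunctionals V) := by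
  induction hcard : Fintype.card ι using Nat.strong_induction_on generalizing ι with
  | _ N IH =>
  rcases subsingleton_or_nontrivial ι with hι | hι
  · exact subset_span (mem_productFunctionals_of_subsingleton z f)
  obtain ⟨z₀, hz₀⟩ := exists_ne z
  obtain ⟨n, e, v, hf⟩ := exists_eq_sum_dualTmulAt_sliceAt (h z₀ hz₀)
  have hcard₀ : Fintype.card {i // i ≠ z₀} < N := hcard ▸ Fintype.card_subtype_lt (not_not.2 rfl)
  have hslice (b : Fin n) :
      sliceAt z₀ (v b) f ∈ span k (productFunctionals fun i : {i // i ≠ z₀} => V i) :=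
    IH _ hcard₀ ⟨z, hz₀.symm⟩ _ (fun j hj => mapsTo_span
      (fun _ => sliceAt_mem_splitFunctionals j.2 (v b)) (h j (fun h' => hj (Subtype.ext h')))) rfl
  rw [hf]
  exact sum_mem fun b _ =>
    mapsTo_span (fun _ => dualTmulAt_mem_productFunctionals (e b)) (hslice b)

end PiTensorProduct

end Field

theorem statement8_general (k : Type) [Field k] (n : ℕ)
    (V : Fin (n + 1) → Type) [∀ i, AddCommGroup (V i)] [∀ i, Module k (V i)]
    (f : Module.Dual k (PiTensorProduct k V))
    (h : ∀ j : Fin (n + 1), j.1 < n → f ∈ Submodule.span k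
      {g : Module.Dual k (PiTensorProduct k V) |
        ∃ (ψ : Module.Dual k (V j))
          (θ : Module.Dual k (PiTensorProduct k (fun i : {i : Fin (n + 1) // i ≠ j} => V i.1))),
          ∀ x : ∀ i, V i, g (PiTensorProduct.tprod k x) =
            ψ (x j) * θ (PiTensorProduct.tprod k
              (fun i : {i : Fin (n + 1) // i ≠ j} => x i.1))}) :
    f ∈ Submodule.span k
      {g : Module.Dual k (PiTensorProduct k V) |
        ∃ φ : ∀ i, Module.Dual k (V i),
          ∀ x : ∀ i, V i, g (PiTensorProduct.tprod k x) = ∏ i, φ i (x i)} :=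
  PiTensorProduct.mem_span_productFunctionals (Fin.last n) f fun j hj => h j (Fin.val_lt_last hj)

/-- If a functional `f` on `V₁ ⊗ ⋯ ⊗ V_{n+1}` lies, for every `k ≤ n`, in the image of the
canonical map `Vₖ* ⊗ (⨂_{i ≠ k} Vᵢ)* → (⨂ᵢ Vᵢ)*` (described as the span of the functionals
determined on pure tensors by `ψ(xₖ)·θ(⨂_{i≠k} xᵢ)`), then `f` lies in the image of the
canonical map `V₁* ⊗ ⋯ ⊗ V_{n+1}* → (⨂ᵢ Vᵢ)*` (the span of the functionals determined on
pure tensors by `∏ᵢ φᵢ(xᵢ)`). -/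
theorem statement8 (k : Type) [Field k] (n : ℕ) (hn : 1 ≤ n)
    (V : Fin (n + 1) → Type) [∀ i, AddCommGroup (V i)] [∀ i, Module k (V i)]
    (f : Module.Dual k (PiTensorProduct k V))
    (h : ∀ j : Fin (n + 1), j.1 < n → f ∈ Submodule.span k
      {g : Module.Dual k (PiTensorProduct k V) |
        ∃ (ψ : Module.Dual k (V j))
          (θ : Module.Dual k (PiTensorProduct k (fun i : {i : Fin (n + 1) // i ≠ j} => V i.1))),
          ∀ x : ∀ i, V i, g (PiTensorProduct.tprod k x) =
            ψ (x j) * θ (PiTensorProduct.tprod k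
              (fun i : {i : Fin (n + 1) // i ≠ j} => x i.1))}) :
    f ∈ Submodule.span k
      {g : Module.Dual k (PiTensorProduct k V) |
        ∃ φ : ∀ i, Module.Dual k (V i),
          ∀ x : ∀ i, V i, g (PiTensorProduct.tprod k x) = ∏ i, φ i (x i)} :=
  statement8_general k n V f h
end

section
/- Let k be a field and V₁, V₂, V₃ k-vector spaces. Let f be a linear functional on V₁ ⊗ V₂ ⊗ V₃. If f lies in the image of the canonical map V₁* ⊗ (V₂ ⊗ V₃)* → (V₁ ⊗ V₂ ⊗ V₃)* and also in the image of the canonical map V₂* ⊗ (V₁ ⊗ V₃)* → (V₁ ⊗ V₂ ⊗ V₃)*, then f lies in the image of the canonical map V₁* ⊗ V₂* ⊗ V₃* → (V₁ ⊗ V₂ ⊗ V₃)*. -/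
/-!
Currying identifies a functional `f` on `V₁ ⊗ (V₂ ⊗ V₃)` with its slice map
`v ↦ f (v ⊗ ·) : V₁ → (V₂ ⊗ V₃)*`. The first hypothesis says that the slice map has
finite rank; the second, that every slice lies in the image `R` of `V₂* ⊗ V₃*`. A finite-rank
map into `R` factors through a finite-dimensional subspace of `R`, which lifts to `V₂* ⊗ V₃*`,
so the slice map comes from `V₁* ⊗ (V₂* ⊗ V₃*)`.
-/

open TensorProduct Module LinearMap

section CommSemiring

variable {R M N V₁ V₂ V₃ : Type*} [CommSemiring R] [AddCommMonoid M] [Module R M]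
  [AddCommMonoid N] [Module R N] [AddCommMonoid V₁] [Module R V₁] [AddCommMonoid V₂]
  [Module R V₂] [AddCommMonoid V₃] [Module R V₃]

theorem curry_dualDistrib (t : Dual R M ⊗[R] Dual R N) :
    curry (dualDistrib R M N t) = dualTensorHom R M (Dual R N) t := by
  ext m n
  induction t using TensorProduct.induction_on with
  | zero => simp
  | tmul φ ψ => simp [dualDistrib_apply]
  | add a b ha hb => simp only [curry_apply, map_add, LinearMap.add_apply] at *; rw [ha, hb]

theorem curry_dualMap_leftComm_dualDistrib (u : Dual R V₂ ⊗[R] Dual R (V₁ ⊗[R] V₃)) (v : V₁) :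
    curry ((leftComm R V₁ V₂ V₃).toLinearMap.dualMap (dualDistrib R V₂ (V₁ ⊗[R] V₃) u)) v =
      dualDistrib R V₂ V₃ ((mk R V₁ V₃ v).dualMap.lTensor _ u) := by
  refine TensorProduct.ext' fun y z => ?_
  rw [curry_apply]
  induction u using TensorProduct.induction_on with
  | zero => simp
  | tmul ψ η => simp [dualDistrib_apply]
  | add a b ha hb => simp only [map_add, LinearMap.add_apply, ha, hb]

end CommSemiring

section Field

variable {k M P Q : Type*} [Field k] [AddCommMonoid M] [Module k M] [AddCommGroup P] [Module k P]
  [AddCommMonoid Q] [Module k Q]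

theorem finiteDimensional_range_dualTensorHom (t : Dual k M ⊗[k] P) :
    FiniteDimensional k (range (dualTensorHom k M P t)) := by
  obtain ⟨P', _, ht⟩ := exists_finite_submodule_right_of_setFinite {t} (Set.finite_singleton t)
  obtain ⟨t', rfl⟩ := ht rfl
  have hrange : range (dualTensorHom k M P (P'.subtype.lTensor _ t')) ≤ P' := by
    rw [← LinearMap.comp_apply, dualTensorHom_comp_lTensor]
    rintro _ ⟨m, rfl⟩
    exact (dualTensorHom k M P' t' m).2
  exact Submodule.finiteDimensional_of_le hrange

theorem mem_range_dualTensorHom_comp_lTensor {φ : Q →ₗ[k] P} {g : M →ₗ[k] P}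
    [FiniteDimensional k (range g)] (hg : range g ≤ range φ) :
    g ∈ range (dualTensorHom k M P ∘ₗ φ.lTensor (Dual k M)) := by
  obtain ⟨s, hs⟩ := Module.projective_lifting_property φ.rangeRestrict
    (Submodule.inclusion hg) φ.surjective_rangeRestrict
  obtain ⟨y, hy⟩ := (dualTensorHom_bijective_of_finite_projective_right (R := k) (M := M)
    (N := range g)).2 g.rangeRestrict
  have hφs : φ ∘ₗ s = (range g).subtype :=
    LinearMap.ext fun w => congrArg Subtype.val (LinearMap.congr_fun hs w)
  refine ⟨s.lTensor _ y, ?_⟩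
  rw [LinearMap.comp_apply, ← LinearMap.comp_apply (φ.lTensor _), ← lTensor_comp,
    ← LinearMap.comp_apply, dualTensorHom_comp_lTensor, hφs, LinearMap.comp_apply, hy]
  rfl

end Field

/-- If a functional on `V₁ ⊗ V₂ ⊗ V₃` lies in the image of the canonical map
`V₁* ⊗ (V₂ ⊗ V₃)* → (V₁ ⊗ V₂ ⊗ V₃)*` and in the image of the canonical map
`V₂* ⊗ (V₁ ⊗ V₃)* → (V₁ ⊗ V₂ ⊗ V₃)*`, then it lies in the image of the canonical map
`V₁* ⊗ V₂* ⊗ V₃* → (V₁ ⊗ V₂ ⊗ V₃)*`. -/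
theorem statement9 (k V₁ V₂ V₃ : Type) [Field k]
    [AddCommGroup V₁] [Module k V₁] [AddCommGroup V₂] [Module k V₂]
    [AddCommGroup V₃] [Module k V₃]
    (f : Module.Dual k (V₁ ⊗[k] (V₂ ⊗[k] V₃)))
    (h₁ : f ∈ LinearMap.range (TensorProduct.dualDistrib k V₁ (V₂ ⊗[k] V₃)))
    (h₂ : f ∈ LinearMap.range
      ((TensorProduct.leftComm k V₁ V₂ V₃).toLinearMap.dualMap ∘ₗ
        TensorProduct.dualDistrib k V₂ (V₁ ⊗[k] V₃))) :
    f ∈ LinearMap.range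
      (TensorProduct.dualDistrib k V₁ (V₂ ⊗[k] V₃) ∘ₗ
        TensorProduct.map LinearMap.id (TensorProduct.dualDistrib k V₂ V₃)) := by
  obtain ⟨t, rfl⟩ := h₁
  obtain ⟨u, hu⟩ := h₂
  have hslices : range (curry (dualDistrib k V₁ (V₂ ⊗[k] V₃) t)) ≤
      range (dualDistrib k V₂ V₃) := by
    rintro _ ⟨v, rfl⟩
    rw [← hu, LinearMap.comp_apply, curry_dualMap_leftComm_dualDistrib]
    exact mem_range_self _ _
  rw [curry_dualDistrib] at hslices
  have := finiteDimensional_range_dualTensorHom t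
  obtain ⟨x, hx⟩ := mem_range_dualTensorHom_comp_lTensor hslices
  refine ⟨x, curry_injective ?_⟩
  rw [LinearMap.comp_apply, curry_dualDistrib, curry_dualDistrib]
  exact hx
end

section
/- Let k be a field and V, W k-vector spaces. A linear functional f : V ⊗ W → k lies in the image of the canonical map V* ⊗ W* → (V ⊗ W)* if and only if the linear map W → V* sending w to the functional v ↦ f(v ⊗ w) has finite-dimensional range, i.e. the span in V* of the translations {v ↦ f(v ⊗ w) : w ∈ W} is finite-dimensional. -/
/-!
Currying identifies `(V ⊗ W)*` with `Hom(W, V*)`, and under this identification the canonical map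
`V* ⊗ W* → (V ⊗ W)*` becomes, after swapping the factors, the map `W* ⊗ V* → Hom(W, V*)`,
`ψ ⊗ φ ↦ (w ↦ ψ w • φ)`. Its image consists exactly of the maps of finite rank: an elementary
tensor gives a map of rank at most one, and conversely a map with finite-dimensional range `U`
factors through `U`, for which `W* ⊗ U → Hom(W, U)` is already bijective.
-/

open TensorProduct Module LinearMap

section dualTensorHom

variable {R M N : Type*}

theorem range_dualTensorHom_tmul_le [CommSemiring R] [AddCommMonoid M] [AddCommMonoid N]
    [Module R M] [Module R N] (φ : Dual R M) (n : N) :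
    range (dualTensorHom R M N (φ ⊗ₜ n)) ≤ R ∙ n := by
  rintro _ ⟨m, rfl⟩
  exact Submodule.smul_mem _ _ (Submodule.mem_span_singleton_self n)

theorem fg_range_dualTensorHom [CommRing R] [IsNoetherianRing R] [AddCommMonoid M]
    [AddCommGroup N] [Module R M] [Module R N] (x : Dual R M ⊗[R] N) :
    (range (dualTensorHom R M N x)).FG := by
  induction x using TensorProduct.induction_on with
  | zero => simpa using Submodule.fg_bot
  | tmul φ n => exact (Submodule.fg_span_singleton n).of_le (range_dualTensorHom_tmul_le φ n)
  | add x y hx hy => simpa using (hx.sup hy).of_le (range_add_le _ _)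

theorem mem_range_dualTensorHom_of_finite_projective [CommSemiring R] [AddCommMonoid M]
    [AddCommMonoid N] [Module R M] [Module R N]
    (g : M →ₗ[R] N) [Module.Finite R (range g)] [Projective R (range g)] :
    g ∈ range (dualTensorHom R M N) := by
  obtain ⟨y, hy⟩ := dualTensorHom_bijective_of_finite_projective_right.2 g.rangeRestrict
  refine ⟨(range g).subtype.lTensor _ y, ?_⟩
  rw [← comp_apply, dualTensorHom_comp_lTensor, comp_apply, hy]
  rfl

theorem mem_range_dualTensorHom_iff [Field R] [AddCommGroup M] [AddCommGroup N]
    [Module R M] [Module R N] (g : M →ₗ[R] N) :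
    g ∈ range (dualTensorHom R M N) ↔ FiniteDimensional R (range g) := by
  constructor
  · rintro ⟨x, rfl⟩
    exact Module.Finite.iff_fg.2 (fg_range_dualTensorHom x)
  · intro _
    exact mem_range_dualTensorHom_of_finite_projective g

end dualTensorHom

section dualDistrib

variable {R M N : Type*} [CommSemiring R] [AddCommMonoid M] [AddCommMonoid N]
  [Module R M] [Module R N]

theorem flip_lcurry_dualDistrib (x : Dual R M ⊗[R] Dual R N) :
    (lcurry (.id R) M N R (dualDistrib R M N x)).flip =
      dualTensorHom R N (Dual R M) (TensorProduct.comm R _ _ x) := by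
  ext n m
  induction x using TensorProduct.induction_on with
  | zero => simp
  | tmul φ ψ => simp [dualDistrib_apply, mul_comm]
  | add x y hx hy => simp_all

theorem mem_range_dualDistrib_iff (f : Dual R (M ⊗[R] N)) :
    f ∈ range (dualDistrib R M N) ↔
      (lcurry (.id R) M N R f).flip ∈ range (dualTensorHom R N (Dual R M)) := by
  constructor
  · rintro ⟨x, rfl⟩
    exact ⟨TensorProduct.comm R _ _ x, (flip_lcurry_dualDistrib x).symm⟩
  · rintro ⟨y, hy⟩
    refine ⟨(TensorProduct.comm R _ _).symm y, TensorProduct.ext' fun m n => ?_⟩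
    have hcurry := flip_lcurry_dualDistrib ((TensorProduct.comm R _ _).symm y)
    rw [LinearEquiv.apply_symm_apply, hy] at hcurry
    exact congr($hcurry n m)

end dualDistrib

/-- A functional `f` on `V ⊗ W` lies in the image of the canonical map
`V* ⊗ W* → (V ⊗ W)*` iff the linear map `W → V*`, `w ↦ (v ↦ f (v ⊗ w))`, has
finite-dimensional range. -/
theorem statement11 (k V W : Type) [Field k]
    [AddCommGroup V] [Module k V] [AddCommGroup W] [Module k W]
    (f : Module.Dual k (V ⊗[k] W)) :
    f ∈ LinearMap.range (TensorProduct.dualDistrib k V W) ↔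
      FiniteDimensional k ↥(LinearMap.range ((TensorProduct.lcurry (RingHom.id k) V W k f).flip)) := by
  rw [mem_range_dualDistrib_iff, mem_range_dualTensorHom_iff]
end

section
/- Let k be a field, A, B k-vector spaces, A'' , B'' k-vector spaces, and A' ≤ A'', B' ≤ B'' subspaces. Suppose t ∈ Hom_k(A, A'') ⊗ Hom_k(B, B'') is an element whose image under the canonical map Hom_k(A, A'') ⊗ Hom_k(B, B'') → Hom_k(A ⊗ B, A'' ⊗ B'') is a linear map A ⊗ B → A'' ⊗ B'' whose range is contained in the subspace A' ⊗ B' of A'' ⊗ B''. Then t lies in the image of the map Hom_k(A, A') ⊗ Hom_k(B, B') → Hom_k(A, A'') ⊗ Hom_k(B, B'') induced by the inclusions A' ≤ A'' and B' ≤ B''. (Equivalently, the square comparing Hom_k(A, A') ⊗ Hom_k(B, B') and Hom_k(A, A'') ⊗ Hom_k(B, B'') over Hom_k(A ⊗ B, A' ⊗ B') and Hom_k(A ⊗ B, A'' ⊗ B'') is cartesian.) -/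
/-!
Over a field every space is flat, so `Hom(A, -)` is left exact and `M' ⊗ N'` is the intersection
of the kernels of `M ⊗ N → (M/M') ⊗ N` and `M ⊗ N → M ⊗ (N/N')`. Taking `M = Hom(A, A'')` and
`M' = Hom(A, A')`, with `Hom(A, A''/A')` in place of `M/M'`, it suffices that `t` vanishes in
`Hom(A, A''/A') ⊗ Hom(B, B'')` and, symmetrically, in `Hom(A, A'') ⊗ Hom(B, B''/B')`. Since
`homTensorHomMap` is natural in the targets and injective over a field (compare coordinates in
bases of the targets), this vanishing is the hypothesis that `A ⊗ B → A'' ⊗ B'' → (A''/A') ⊗ B''`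
is zero.
-/

open TensorProduct LinearMap Function

theorem LinearMap.exact_llcomp_of_exact_of_injective {R M N P Q : Type*} [CommRing R]
    [AddCommGroup M] [AddCommGroup N] [AddCommGroup P] [AddCommGroup Q]
    [Module R M] [Module R N] [Module R P] [Module R Q]
    {f : N →ₗ[R] P} {g : P →ₗ[R] Q} (hfg : Exact f g) (hf : Injective f) :
    Exact (llcomp (σ₁₂ := RingHom.id R) (σ₁₃ := RingHom.id R) R M N P f)
      (llcomp (σ₁₂ := RingHom.id R) (σ₁₃ := RingHom.id R) R M P Q g) := by
  intro h
  simp only [llcomp_apply', Set.mem_range]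
  refine ⟨fun hh ↦ ?_, ?_⟩
  · have hrange : range h ≤ range f := hfg.linearMap_ker_eq ▸ range_le_ker_iff.2 hh
    refine ⟨(LinearEquiv.ofInjective f hf).symm ∘ₗ h.codRestrict _ fun m ↦ hrange ⟨m, rfl⟩, ?_⟩
    ext m
    simp
  · rintro ⟨y, rfl⟩
    rw [← LinearMap.comp_assoc, hfg.linearMap_comp_eq_zero, zero_comp]

namespace TensorProduct

theorem mem_range_map_of_exact {R M M' P N N' Q : Type*} [CommRing R]
    [AddCommGroup M] [AddCommGroup M'] [AddCommGroup P]
    [AddCommGroup N] [AddCommGroup N'] [AddCommGroup Q]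
    [Module R M] [Module R M'] [Module R P] [Module R N] [Module R N'] [Module R Q]
    [Module.Flat R M'] [Module.Flat R N] [Module.Flat R Q]
    {f : M' →ₗ[R] M} {p : M →ₗ[R] P} {g : N' →ₗ[R] N} {q : N →ₗ[R] Q}
    (hfp : Exact f p) (hgq : Exact g q) (hf : Injective f) {t : M ⊗[R] N}
    (hp : rTensor N p t = 0) (hq : lTensor M q t = 0) : t ∈ range (map f g) := by
  obtain ⟨s, rfl⟩ := (Module.Flat.rTensor_exact N hfp t).1 hp
  have hs : lTensor M' q s = 0 := by
    apply Module.Flat.rTensor_preserves_injective_linearMap (M := Q) f hf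
    rw [← LinearMap.comp_apply, rTensor_comp_lTensor, ← lTensor_comp_rTensor, LinearMap.comp_apply,
      hq, map_zero]
  obtain ⟨s', rfl⟩ := (Module.Flat.lTensor_exact M' hgq s).1 hs
  exact ⟨s', by rw [← LinearMap.comp_apply, rTensor_comp_lTensor]⟩

section Free

variable {R M N P Q : Type*} [CommRing R]
    [AddCommGroup M] [AddCommGroup N] [AddCommGroup P] [AddCommGroup Q]
    [Module R M] [Module R N] [Module R P] [Module R Q]

theorem lTensorHomToHomLTensor_injective [Module.Free R P] :
    Injective (lTensorHomToHomLTensor (.id R) M P Q) := by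
  classical
  let b := Module.Free.chooseBasis R P
  have hcoeff : ∀ x m i, equivFinsuppOfBasisLeft b (lTensorHomToHomLTensor (.id R) M P Q x m) i =
      equivFinsuppOfBasisLeft b x i m := by
    intro x m i
    induction x using TensorProduct.induction_on <;> simp_all
  refine (injective_iff_map_eq_zero _).2 fun x hx ↦ (equivFinsuppOfBasisLeft b).injective ?_
  ext i m
  simpa [hx] using (hcoeff x m i).symm

theorem rTensorHomToHomRTensor_injective [Module.Free R Q] :
    Injective (rTensorHomToHomRTensor (.id R) M P Q) := by
  classical
  let b := Module.Free.chooseBasis R Q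
  have hcoeff : ∀ x m i, equivFinsuppOfBasisRight b (rTensorHomToHomRTensor (.id R) M P Q x m) i =
      equivFinsuppOfBasisRight b x i m := by
    intro x m i
    induction x using TensorProduct.induction_on <;> simp_all
  refine (injective_iff_map_eq_zero _).2 fun x hx ↦ (equivFinsuppOfBasisRight b).injective ?_
  ext i m
  simpa [hx] using (hcoeff x m i).symm

theorem lTensorHomToHomLTensor_rTensorHomToHomRTensor_apply
    (x : (M →ₗ[R] P) ⊗[R] (N →ₗ[R] Q)) (m : M) (n : N) :
    lTensorHomToHomLTensor (.id R) N P Q (rTensorHomToHomRTensor (.id R) M P _ x m) n =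
      homTensorHomMap (.id R) M N P Q x (m ⊗ₜ n) := by
  induction x using TensorProduct.induction_on <;> simp_all

theorem homTensorHomMap_injective [Module.Free R P] [Module.Free R (N →ₗ[R] Q)] :
    Injective (homTensorHomMap (.id R) M N P Q) := by
  refine (injective_iff_map_eq_zero _).2 fun x hx ↦ rTensorHomToHomRTensor_injective ?_
  ext m : 1
  refine lTensorHomToHomLTensor_injective ?_
  ext n
  simpa [lTensorHomToHomLTensor_rTensorHomToHomRTensor_apply] using congr($hx (m ⊗ₜ n))

end Free

section Naturality

variable {R M N P P' Q Q' : Type*} [CommSemiring R]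
    [AddCommMonoid M] [AddCommMonoid N] [AddCommMonoid P] [AddCommMonoid P']
    [AddCommMonoid Q] [AddCommMonoid Q']
    [Module R M] [Module R N] [Module R P] [Module R P'] [Module R Q] [Module R Q']

theorem homTensorHomMap_rTensor_llcomp (f : P →ₗ[R] P')
    (x : (M →ₗ[R] P) ⊗[R] (N →ₗ[R] Q)) :
    homTensorHomMap (.id R) M N P' Q
        (rTensor _ (llcomp (σ₁₂ := RingHom.id R) (σ₁₃ := RingHom.id R) R M P P' f) x) =
      rTensor Q f ∘ₗ homTensorHomMap (.id R) M N P Q x := by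
  induction x using TensorProduct.induction_on with
  | zero => simp
  | tmul g h =>
    rw [rTensor_tmul, homTensorHomMap_apply, homTensorHomMap_apply, rTensor_comp_map]
    rfl
  | add x y hx hy => simp only [map_add, hx, hy, LinearMap.comp_add]

theorem homTensorHomMap_lTensor_llcomp (f : Q →ₗ[R] Q')
    (x : (M →ₗ[R] P) ⊗[R] (N →ₗ[R] Q)) :
    homTensorHomMap (.id R) M N P Q'
        (lTensor _ (llcomp (σ₁₂ := RingHom.id R) (σ₁₃ := RingHom.id R) R N Q Q' f) x) =
      lTensor P f ∘ₗ homTensorHomMap (.id R) M N P Q x := by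
  induction x using TensorProduct.induction_on with
  | zero => simp
  | tmul g h =>
    rw [lTensor_tmul, homTensorHomMap_apply, homTensorHomMap_apply, lTensor_comp_map]
    rfl
  | add x y hx hy => simp only [map_add, hx, hy, LinearMap.comp_add]

end Naturality

end TensorProduct

/-- If `t ∈ Hom(A, A'') ⊗ Hom(B, B'')` induces a map `A ⊗ B → A'' ⊗ B''` whose range lands
in the subspace `A' ⊗ B'`, then `t` comes from `Hom(A, A') ⊗ Hom(B, B')` via the inclusions. -/
theorem statement13 (k A B A'' B'' : Type) [Field k]
    [AddCommGroup A] [Module k A] [AddCommGroup B] [Module k B]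
    [AddCommGroup A''] [Module k A''] [AddCommGroup B''] [Module k B'']
    (A' : Submodule k A'') (B' : Submodule k B'')
    (t : (A →ₗ[k] A'') ⊗[k] (B →ₗ[k] B''))
    (h : LinearMap.range (TensorProduct.homTensorHomMap (RingHom.id k) A B A'' B'' t) ≤
      LinearMap.range (TensorProduct.map A'.subtype B'.subtype)) :
    t ∈ LinearMap.range
      (TensorProduct.map (LinearMap.llcomp (σ₁₂ := RingHom.id k) (σ₁₃ := RingHom.id k) k A (↥A') A'' A'.subtype)
        (LinearMap.llcomp (σ₁₂ := RingHom.id k) (σ₁₃ := RingHom.id k) k B (↥B') B'' B'.subtype)) := by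
  have hA : rTensor _ (llcomp (σ₁₂ := RingHom.id k) (σ₁₃ := RingHom.id k) k A A'' _ A'.mkQ) t = 0 :=
    homTensorHomMap_injective <| by
      rw [homTensorHomMap_rTensor_llcomp, map_zero]
      refine range_le_ker_iff.1 (h.trans (range_le_ker_iff.2 ?_))
      rw [rTensor_comp_map, (exact_subtype_mkQ A').linearMap_comp_eq_zero, map_zero_left]
  have hB : lTensor _ (llcomp (σ₁₂ := RingHom.id k) (σ₁₃ := RingHom.id k) k B B'' _ B'.mkQ) t = 0 :=
    homTensorHomMap_injective <| by
      rw [homTensorHomMap_lTensor_llcomp, map_zero]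
      refine range_le_ker_iff.1 (h.trans (range_le_ker_iff.2 ?_))
      rw [lTensor_comp_map, (exact_subtype_mkQ B').linearMap_comp_eq_zero, map_zero_right]
  exact mem_range_map_of_exact
    (exact_llcomp_of_exact_of_injective (exact_subtype_mkQ A') A'.injective_subtype)
    (exact_llcomp_of_exact_of_injective (exact_subtype_mkQ B') B'.injective_subtype)
    (fun _ _ ↦ (cancel_left A'.injective_subtype).1) hA hB
end

section
/- Let k be a field and A an associative k-algebra. For a linear functional f : A → k, let Δf : A ⊗ A → k be the functional a ⊗ b ↦ f(ab). Then Δf lies in the image of the canonical map A* ⊗ A* → (A ⊗ A)* if and only if the span in A* of the right translations {a ↦ f(ab) : b ∈ A} is finite-dimensional. -/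
open TensorProduct

section DualTensor

variable {k M N : Type*} [Field k] [AddCommGroup M] [Module k M] [AddCommGroup N] [Module k N]

theorem finiteDimensional_range_flip_curry_dualDistrib (x : Module.Dual k M ⊗[k] Module.Dual k N) :
    FiniteDimensional k (LinearMap.range (curry (dualDistrib k M N x)).flip) := by
  induction x using TensorProduct.induction_on with
  | zero =>
    have h0 : (curry (dualDistrib k M N 0)).flip = 0 := by ext; simp
    rw [h0, LinearMap.range_zero]
    infer_instance
  | tmul φ ψ =>
    refine Submodule.finiteDimensional_of_le (S₂ := k ∙ φ) ?_
    rintro _ ⟨n, rfl⟩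
    refine Submodule.mem_span_singleton.2 ⟨ψ n, ?_⟩
    ext m
    simp [mul_comm]
  | add x y hx hy =>
    have hadd : (curry (dualDistrib k M N (x + y))).flip =
        (curry (dualDistrib k M N x)).flip + (curry (dualDistrib k M N y)).flip := by ext; simp
    rw [hadd]
    exact Submodule.finiteDimensional_of_le (LinearMap.range_add_le _ _)

/-- The representing tensor is `∑ i, bᵢ ⊗ (bᵢ* ∘ Φ)` for a basis `(bᵢ)` of the range of
`Φ : n ↦ φ (· ⊗ n)`. -/
theorem mem_range_dualDistrib_of_finiteDimensional (φ : Module.Dual k (M ⊗[k] N))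
    [FiniteDimensional k (LinearMap.range (curry φ).flip)] :
    φ ∈ LinearMap.range (dualDistrib k M N) := by
  set Φ := (curry φ).flip
  have : Module.Free k (LinearMap.range Φ) := Module.Free.of_divisionRing k (LinearMap.range Φ)
  let B := Module.finBasis k (LinearMap.range Φ)
  refine ⟨∑ i, (B i : Module.Dual k M) ⊗ₜ (B.coord i ∘ₗ Φ.rangeRestrict), ?_⟩
  refine TensorProduct.ext' fun m n => ?_
  have hΦ : (Φ.rangeRestrict n : Module.Dual k M) m = φ (m ⊗ₜ n) := by simp [Φ]
  rw [← hΦ]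
  conv_rhs => rw [← B.sum_repr (Φ.rangeRestrict n)]
  simp only [map_sum, LinearMap.sum_apply, dualDistrib_apply, LinearMap.comp_apply,
    Module.Basis.coord_apply, Submodule.coe_sum, Submodule.coe_smul, LinearMap.smul_apply,
    smul_eq_mul]
  exact Finset.sum_congr rfl fun i _ => mul_comm _ _

theorem mem_range_dualDistrib_iff_s14 (φ : Module.Dual k (M ⊗[k] N)) :
    φ ∈ LinearMap.range (dualDistrib k M N) ↔
      FiniteDimensional k (LinearMap.range (curry φ).flip) := by
  refine ⟨?_, fun _ => mem_range_dualDistrib_of_finiteDimensional φ⟩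
  rintro ⟨x, rfl⟩
  exact finiteDimensional_range_flip_curry_dualDistrib x

end DualTensor

/-- For a functional `f` on an associative `k`-algebra `A`, the functional
`Δf : a ⊗ b ↦ f (a * b)` lies in the image of the canonical map `A* ⊗ A* → (A ⊗ A)*`
iff the span of the right translations `a ↦ f (a * b)` is finite-dimensional. -/
theorem statement14 (k A : Type) [Field k] [Ring A] [Algebra k A]
    (f : Module.Dual k A) :
    (LinearMap.mul' k A).dualMap f ∈ LinearMap.range (TensorProduct.dualDistrib k A A) ↔
      FiniteDimensional k
        ↥(Submodule.span k {g : Module.Dual k A | ∃ b : A, ∀ a : A, g a = f (a * b)}) := by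
  set Φ := (curry ((LinearMap.mul' k A).dualMap f)).flip
  have hΦ : ∀ b a, Φ b a = f (a * b) := fun _ _ => rfl
  have hspan : Submodule.span k {g : Module.Dual k A | ∃ b : A, ∀ a : A, g a = f (a * b)} =
      LinearMap.range Φ := by
    rw [← Submodule.span_eq (LinearMap.range Φ)]
    congr 1
    ext g
    simp [← hΦ, LinearMap.ext_iff, eq_comm]
  rw [hspan, mem_range_dualDistrib_iff_s14]
end

section
/- Let k be a field and A an associative k-algebra. Let Rep(A) ≤ A* be the subspace of representative functionals, i.e. those f : A → k such that the functional Δf : a ⊗ b ↦ f(ab) lies in the image of the canonical map A* ⊗ A* → (A ⊗ A)*. Then for every f ∈ Rep(A), the functional Δf lies in the image of the canonical map Rep(A) ⊗ Rep(A) → (A ⊗ A)*; that is, in a decomposition Δf = Σᵢ gᵢ ⊗ hᵢ the functionals gᵢ and hᵢ can be chosen representative. -/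
/-!
Translates `x ↦ f (a * x)` and `x ↦ f (x * a)` of a representative functional are again
representative. If `Δf = ∑ gᵢ ⊗ hᵢ`, contracting the right factor against the evaluation at `a`
gives `∑ hᵢ(a) gᵢ = f (· * a)`; when the `hᵢ` are linearly independent, the vectors `(hᵢ(a))ᵢ`
span `kⁿ`, so every `gᵢ` is a linear combination of right translates of `f`, hence
representative. Doing the same on the left, for a decomposition of the resulting tensor in
`Rep(A) ⊗ A*` with independent left factors, makes the right factors representative as well.
-/

open TensorProduct

/-- The subspace of representative functionals on an associative `k`-algebra `A`:
those `f : A → k` such that `Δf : a ⊗ b ↦ f (a * b)` lies in the image of the canonical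
map `A* ⊗ A* → (A ⊗ A)*`. -/
noncomputable def repSubmodule (k A : Type) [Field k] [Ring A] [Algebra k A] :
    Submodule k (Module.Dual k A) :=
  Submodule.comap (LinearMap.mul' k A).dualMap
    (LinearMap.range (TensorProduct.dualDistrib k A A))

open Module

section LinearAlgebra
variable {k V N : Type*} [Field k] [AddCommGroup V] [Module k V] [AddCommGroup N] [Module k N]

theorem Submodule.mem_of_forall_sum_dual_smul_mem {ι : Type*} [Fintype ι] {g : ι → Dual k V}
    (hg : LinearIndependent k g) {h : ι → N} {P : Submodule k N}
    (hP : ∀ v, ∑ i, g i v • h i ∈ P) (j : ι) : h j ∈ P := by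
  classical
  have hspan : Submodule.span k (Set.range (flip fun i => ⇑(g i))) = ⊤ :=
    span_flip_eq_top_iff_linearIndependent.mpr
      (hg.map' (LinearMap.ltoFun k V k k) (LinearMap.ker_eq_bot.mpr DFunLike.coe_injective))
  have hle : Submodule.span k (Set.range (flip fun i => ⇑(g i))) ≤
      P.comap (Fintype.linearCombination k h) := by
    rw [Submodule.span_le]
    rintro _ ⟨v, rfl⟩
    exact hP v
  simpa using hle (hspan ▸ Submodule.mem_top : Pi.single j (1 : k) ∈ _)


variable {M : Type*} [AddCommGroup M] [Module k M]

theorem TensorProduct.mem_range_lTensor_subtype_of_forall_lid_mem (ι : M →ₗ[k] Dual k V)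
    (hι : Function.Injective ι) (P : Submodule k N) (t : M ⊗[k] N)
    (ht : ∀ v, TensorProduct.lid k N (LinearMap.rTensor N (ι.flip v) t) ∈ P) :
    t ∈ LinearMap.range (LinearMap.lTensor M P.subtype) := by
  classical
  let b := Basis.ofVectorSpace k M
  obtain ⟨c, rfl⟩ := eq_repr_basis_left b t
  have hc : ∀ i, c i ∈ P := by
    intro i
    by_cases hi : i ∈ c.support
    · refine Submodule.mem_of_forall_sum_dual_smul_mem (g := fun i : c.support => ι (b i))
        ((b.linearIndependent.map' ι (LinearMap.ker_eq_bot.mpr hι)).comp _ Subtype.val_injective)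
        (h := fun i => c i) (fun v => ?_) ⟨i, hi⟩
      simpa [Finsupp.sum, Finset.sum_attach c.support (fun i => ι (b i) v • c i)] using ht v
    · rw [Finsupp.notMem_support_iff.mp hi]
      exact zero_mem P
  exact Submodule.finsuppSum_mem _ _ _ _ fun i _ => ⟨b i ⊗ₜ ⟨c i, hc i⟩, rfl⟩

theorem TensorProduct.mem_range_rTensor_subtype_of_forall_rid_mem (κ : M →ₗ[k] Dual k V)
    (hκ : Function.Injective κ) (P : Submodule k N) (t : N ⊗[k] M)
    (ht : ∀ v, TensorProduct.rid k N (LinearMap.lTensor N (κ.flip v) t) ∈ P) :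
    t ∈ LinearMap.range (LinearMap.rTensor M P.subtype) := by
  obtain ⟨t', ht'⟩ := mem_range_lTensor_subtype_of_forall_lid_mem κ hκ P (TensorProduct.comm k N M t)
    fun v => by
      rw [← LinearMap.comm_comp_lTensor_comp_comm_eq]
      simpa using ht v
  refine ⟨TensorProduct.comm k M P t', ?_⟩
  rw [← LinearMap.comm_comp_lTensor_comp_comm_eq]
  simp [ht']

end LinearAlgebra

section Contraction
variable {k V W M : Type*} [Field k] [AddCommGroup V] [Module k V] [AddCommGroup W] [Module k W]
  [AddCommMonoid M] [Module k M]

theorem TensorProduct.dualDistrib_comp_map_dualMap {V' W' : Type*} [AddCommGroup V'] [Module k V']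
    [AddCommGroup W'] [Module k W'] (φ : V' →ₗ[k] V) (ψ : W' →ₗ[k] W) :
    dualDistrib k V' W' ∘ₗ map φ.dualMap ψ.dualMap = (map φ ψ).dualMap ∘ₗ dualDistrib k V W := by
  ext g h x y
  simp [dualDistrib_apply]

theorem TensorProduct.lid_rTensor_flip_apply (ι : M →ₗ[k] Dual k V) (t : M ⊗[k] Dual k W)
    (v : V) (w : W) :
    TensorProduct.lid k _ (LinearMap.rTensor _ (ι.flip v) t) w =
      dualDistrib k V W (LinearMap.rTensor _ ι t) (v ⊗ₜ w) := by
  induction t using TensorProduct.induction_on with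
  | zero => simp
  | tmul m g => simp [dualDistrib_apply]
  | add t₁ t₂ h₁ h₂ => simp_all

theorem TensorProduct.rid_lTensor_flip_apply (κ : M →ₗ[k] Dual k W) (t : Dual k V ⊗[k] M)
    (v : V) (w : W) :
    TensorProduct.rid k _ (LinearMap.lTensor _ (κ.flip w) t) v =
      dualDistrib k V W (LinearMap.lTensor _ κ t) (v ⊗ₜ w) := by
  induction t using TensorProduct.induction_on with
  | zero => simp
  | tmul g m => simp [dualDistrib_apply, mul_comm]
  | add t₁ t₂ h₁ h₂ => simp_all

end Contraction

section Representative
variable {k A : Type} [Field k] [Ring A] [Algebra k A]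

theorem comp_mulLeft_mem_repSubmodule {f : Dual k A} (hf : f ∈ repSubmodule k A) (a : A) :
    f ∘ₗ LinearMap.mulLeft k a ∈ repSubmodule k A := by
  obtain ⟨t, ht⟩ := hf
  refine ⟨map (LinearMap.mulLeft k a).dualMap (LinearMap.id : A →ₗ[k] A).dualMap t, ?_⟩
  rw [← LinearMap.comp_apply, dualDistrib_comp_map_dualMap, LinearMap.comp_apply, ht]
  ext x y
  simp [mul_assoc]

theorem comp_mulRight_mem_repSubmodule {f : Dual k A} (hf : f ∈ repSubmodule k A) (a : A) :
    f ∘ₗ LinearMap.mulRight k a ∈ repSubmodule k A := by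
  obtain ⟨t, ht⟩ := hf
  refine ⟨map (LinearMap.id : A →ₗ[k] A).dualMap (LinearMap.mulRight k a).dualMap t, ?_⟩
  rw [← LinearMap.comp_apply, dualDistrib_comp_map_dualMap, LinearMap.comp_apply, ht]
  ext x y
  simp [mul_assoc]

end Representative

/-- If `f` is representative, then `Δf` lies in the image of the canonical map
`Rep(A) ⊗ Rep(A) → (A ⊗ A)*` (the restriction of `A* ⊗ A* → (A ⊗ A)*` to the
subspace of representative functionals). -/
theorem statement15 (k A : Type) [Field k] [Ring A] [Algebra k A]
    (f : Module.Dual k A) (hf : f ∈ repSubmodule k A) :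
    (LinearMap.mul' k A).dualMap f ∈ LinearMap.range
      (TensorProduct.dualDistrib k A A ∘ₗ
        TensorProduct.map (repSubmodule k A).subtype (repSubmodule k A).subtype) := by
  obtain ⟨t, ht⟩ := id hf
  obtain ⟨t', rfl⟩ : t ∈ LinearMap.range (LinearMap.rTensor _ (repSubmodule k A).subtype) := by
    refine mem_range_rTensor_subtype_of_forall_rid_mem LinearMap.id Function.injective_id _ t
      fun a => ?_
    convert comp_mulRight_mem_repSubmodule hf a using 1
    ext x
    rw [rid_lTensor_flip_apply, LinearMap.lTensor_id, LinearMap.id_apply, ht]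
    simp
  obtain ⟨t'', rfl⟩ : t' ∈ LinearMap.range
      (LinearMap.lTensor (repSubmodule k A) (repSubmodule k A).subtype) := by
    -- `M` is explicit: unification cannot recover the `AddCommGroup` instance of the submodule
    -- from the `AddCommMonoid` instance that the type of `t'` carries.
    refine mem_range_lTensor_subtype_of_forall_lid_mem (M := repSubmodule k A)
      (repSubmodule k A).subtype (Submodule.injective_subtype _) _ t' fun a => ?_
    convert comp_mulLeft_mem_repSubmodule hf a using 1
    ext y
    rw [lid_rTensor_flip_apply, ht]
    simp
  exact ⟨t'', by rw [LinearMap.comp_apply, ← LinearMap.rTensor_comp_lTensor]; exact ht⟩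
end
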